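/- For every real number s > 3/2, the series ∑_{k ≥ 1, k odd} φ(k²)/k^{2s}, taken over odd positive integers k, converges and equals ((1 − 2^{2−2s})/(1 − 2^{1−2s})) · ζ(2s−2)/ζ(2s−1), where φ is Euler's totient function and ζ is the Riemann zeta function. -/

import Mathlib

/-!
Since `φ(k²) = k φ(k)`, the series is `∑ χ(k) φ(k) k^{-z}` with `z = 2s - 1` and `χ` the trivial
Dirichlet character mod 2. Twisting `φ ⍟ 1 = id` by `χ` gives `(χφ) ⍟ χ = χ · id`, so the series
equals `L(χ, z - 1) / L(χ, z)`, and `L(χ, w) = (1 - 2^{-w}) ζ(w)` removes the Euler factor at 2.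
-/

open LSeries
open scoped LSeries.notation

theorem Nat.totient_sq (n : ℕ) : (n ^ 2).totient = n * n.totient := by
  rcases n.eq_zero_or_pos with rfl | hn
  · simp
  have h := Nat.totient_gcd_mul_totient_mul n n
  rw [Nat.gcd_self] at h
  refine Nat.eq_of_mul_eq_mul_left (Nat.totient_pos.mpr hn) ?_
  rw [sq, h]
  ring

namespace LSeries

theorem term_natCast_mul (f : ℕ → ℂ) (s : ℂ) :
    term (fun n ↦ n * f n) s = term f (s - 1) := by
  ext n
  rcases eq_or_ne n 0 with rfl | hn
  · simp
  have hn' : (n : ℂ) ≠ 0 := Nat.cast_ne_zero.mpr hn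
  rw [term_of_ne_zero hn, term_of_ne_zero hn, Complex.cpow_sub _ _ hn', Complex.cpow_one]
  field_simp

theorem LSeries_natCast_mul (f : ℕ → ℂ) (s : ℂ) :
    L (fun n ↦ n * f n) s = L f (s - 1) := by
  simp only [LSeries, term_natCast_mul]

theorem convolution_totient_one : ↗Nat.totient ⍟ 1 = fun n : ℕ ↦ (n : ℂ) := by
  ext n
  simp only [convolution_def, Pi.one_apply, mul_one]
  rw [Nat.sum_divisorsAntidiagonal (f := fun a _ ↦ (a.totient : ℂ)), ← Nat.cast_sum,
    Nat.sum_totient]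

theorem LSeriesSummable_totient {s : ℂ} (hs : 2 < s.re) : LSeriesSummable ↗Nat.totient s :=
  LSeriesSummable_of_le_const_mul_rpow hs ⟨1, fun n _ ↦ by
    simpa [show (2 : ℝ) - 1 = 1 by norm_num] using Nat.totient_le n⟩

end LSeries

namespace DirichletCharacter

variable {N : ℕ} (χ : DirichletCharacter ℂ N)

theorem convolution_twist_totient : (↗χ * ↗Nat.totient) ⍟ ↗χ = fun n : ℕ ↦ n * χ n := by
  have h := χ.mul_convolution_distrib ↗Nat.totient 1
  rw [mul_one, convolution_totient_one] at h
  exact h.trans (funext fun n ↦ mul_comm _ _)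

theorem LSeries_twist_totient_eq {s : ℂ} (hs : 2 < s.re) :
    L (↗χ * ↗Nat.totient) s = L ↗χ (s - 1) / L ↗χ s := by
  have hs1 : 1 < s.re := by linarith
  rw [eq_div_iff (LSeries_ne_zero_of_one_lt_re χ hs1), ← LSeries_convolution'
    (LSeriesSummable_mul χ (LSeriesSummable_totient hs)) (LSeriesSummable_of_one_lt_re χ hs1),
    convolution_twist_totient, LSeries_natCast_mul]

theorem LSeries_one_modTwo {s : ℂ} (hs : 1 < s.re) :
    L ↗(1 : DirichletCharacter ℂ 2) s = (1 - 2 ^ (-s)) * riemannZeta s := by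
  rw [← LFunction_eq_LSeries _ hs, ← LFunctionTrivChar, LFunctionTrivChar_eq_mul_riemannZeta
    (fun h ↦ by simp [h] at hs), Nat.Prime.primeFactors Nat.prime_two, Finset.prod_singleton]
  norm_num

theorem one_modTwo_apply (n : ℕ) :
    (1 : DirichletCharacter ℂ 2) (n : ZMod 2) = if _root_.Odd n then 1 else 0 := by
  by_cases hn : _root_.Odd n
  · rw [if_pos hn,
      MulChar.one_apply ((ZMod.isUnit_iff_coprime n 2).mpr (Nat.coprime_two_right.mpr hn))]
  · rw [if_neg hn, MulChar.map_nonunit _ (mt (ZMod.isUnit_iff_coprime n 2).mp (by simpa using hn))]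

end DirichletCharacter

theorem term_twist_one_modTwo_totient (z : ℂ) (k : ℕ) :
    term (↗(1 : DirichletCharacter ℂ 2) * ↗Nat.totient) z k =
      if Odd k then ((k ^ 2).totient : ℂ) / (k : ℂ) ^ (z + 1) else 0 := by
  rcases eq_or_ne k 0 with rfl | hk
  · simp
  have hk' : (k : ℂ) ≠ 0 := Nat.cast_ne_zero.mpr hk
  rw [term_of_ne_zero hk, Pi.mul_apply, DirichletCharacter.one_modTwo_apply]
  split_ifs
  · rw [Nat.totient_sq, Nat.cast_mul, Complex.cpow_add _ _ hk', Complex.cpow_one]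
    field_simp
  · simp

/-- Dirichlet series of the odd totient-square function. -/
theorem totient_sq_dirichlet_series (s : ℝ) (hs : 3/2 < s) :
    HasSum (fun k : ℕ => if Odd k then (Nat.totient (k ^ 2) : ℂ) / (k : ℂ) ^ (2 * (s : ℂ)) else 0)
      ((1 - (2 : ℂ) ^ (2 - 2 * (s : ℂ))) / (1 - (2 : ℂ) ^ (1 - 2 * (s : ℂ)))
        * riemannZeta (2 * (s : ℂ) - 2) / riemannZeta (2 * (s : ℂ) - 1)) := by
  set χ : DirichletCharacter ℂ 2 := 1
  have hs₂ : 2 < (2 * s - 1 : ℂ).re := by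
    rw [show (2 * s - 1 : ℂ) = ((2 * s - 1 : ℝ) : ℂ) by push_cast; rfl, Complex.ofReal_re]
    linarith
  have h : HasSum (term (↗χ * ↗Nat.totient) (2 * s - 1)) (L (↗χ * ↗Nat.totient) (2 * s - 1)) :=
    (χ.LSeriesSummable_mul (LSeriesSummable_totient hs₂)).LSeriesHasSum
  convert h using 1
  · ext k
    rw [term_twist_one_modTwo_totient, sub_add_cancel]
  · rw [χ.LSeries_twist_totient_eq hs₂, DirichletCharacter.LSeries_one_modTwo
      (by rw [Complex.sub_re, Complex.one_re]; linarith),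
      DirichletCharacter.LSeries_one_modTwo (by linarith), mul_div_mul_comm, mul_div_assoc]
    ring_nf
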